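/- arXiv:1907.05942 — 6 statements merged into one kernel-verified Lean document; each statement's English description precedes it below -/
import Mathlib

section
/- With the convergents h'_{-n} = A'_{-n}/B'_{-n} of the continued fraction H' = c_0/(1 - a_{-1}/(1 - c_{-1}/(1 - a_{-2}/(1 - ⋯)))), under the assumption 0 < A'_{-n} < B'_{-n} for all n ≥ 1 and a_{-n}, c_{-n} > 0, the sequence (h'_{-n})_{n≥0} satisfies 0 = h'_0 < h'_{-1} < h'_{-2} < ⋯ < 1; in particular it is strictly increasing and bounded above by 1, hence convergent. -/
/-!
Write `u n = A' (1 - n)` and `v n = B' (1 - n)`. Both satisfy the single recurrence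
`x (n + 2) = x (n + 1) - k n * x n`, where `k = c₀, a₁, c₁, a₂, …` interlaces the two coefficient
sequences. Their Casoratian `W n = u (n + 1) * v n - u n * v (n + 1)` therefore obeys
`W (n + 1) = k n * W n` with `W 0 = 1`, so it is positive; and `W (n + 1)` is, up to the positive
factor `v (n + 1) * v (n + 2)`, the difference of consecutive convergents. Monotone and bounded
by `1`, the convergents converge.
-/

open Filter Topology Finset

section Casoratian

variable {R : Type*} [CommRing R]

def casoratian (u v : ℕ → R) (n : ℕ) : R := u (n + 1) * v n - u n * v (n + 1)

theorem casoratian_succ {u v b c : ℕ → R}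
    (hu : ∀ n, u (n + 2) = b n * u (n + 1) - c n * u n)
    (hv : ∀ n, v (n + 2) = b n * v (n + 1) - c n * v n) (n : ℕ) :
    casoratian u v (n + 1) = c n * casoratian u v n := by
  simp only [casoratian, hu, hv]
  ring

theorem casoratian_pos [PartialOrder R] [IsStrictOrderedRing R] {u v b c : ℕ → R}
    (hu : ∀ n, u (n + 2) = b n * u (n + 1) - c n * u n)
    (hv : ∀ n, v (n + 2) = b n * v (n + 1) - c n * v n)
    (h₀ : 0 < casoratian u v 0) (hc : ∀ n, 0 < c n) (n : ℕ) : 0 < casoratian u v n := by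
  induction n with
  | zero => exact h₀
  | succ n ih => rw [casoratian_succ hu hv]; exact mul_pos (hc n) ih

end Casoratian

theorem strictMono_div_of_casoratian_pos {K : Type*} [Field K] [LinearOrder K]
    [IsStrictOrderedRing K] {p q : ℕ → K} (hq : ∀ n, 0 < q n)
    (hW : ∀ n, 0 < casoratian p q n) : StrictMono fun n => p n / q n := by
  refine strictMono_nat_of_lt_succ fun n => ?_
  rw [div_lt_div_iff₀ (hq n) (hq (n + 1))]
  have := hW n
  rw [casoratian] at this
  linarith

def interlace {R : Type*} (c a : ℕ → R) (n : ℕ) : R :=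
  if Even n then c (n / 2) else a (n / 2 + 1)

theorem interlace_pos {R : Type*} [Zero R] [LT R] {c a : ℕ → R} (hc : ∀ n, 0 < c n)
    (ha : ∀ n, 0 < a n) (n : ℕ) :
    0 < interlace c a n := by
  unfold interlace
  split_ifs
  exacts [hc _, ha _]

theorem recurrence_of_interlaced {R : Type*} [Ring R] (a c : ℕ → R) (X : ℤ → R)
    (heven : ∀ n : ℕ, 1 ≤ n →
      X (-(2 * (n : ℤ))) = X (-(2 * (n : ℤ)) + 1) - a n * X (-(2 * (n : ℤ)) + 2))
    (hodd : ∀ n : ℕ,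
      X (-(2 * (n : ℤ)) - 1) = X (-(2 * (n : ℤ))) - c n * X (-(2 * (n : ℤ)) + 1))
    (n : ℕ) :
    X (1 - (n + 2 : ℕ)) = X (1 - (n + 1 : ℕ)) - interlace c a n * X (1 - n) := by
  obtain ⟨m, rfl | rfl⟩ := Nat.even_or_odd' n
  · rw [interlace, if_pos (even_two_mul m), Nat.mul_div_cancel_left m two_pos]
    have h := hodd m
    push_cast
    ring_nf at h ⊢
    exact h
  · rw [interlace, if_neg (Nat.not_even_two_mul_add_one m), Nat.mul_add_div two_pos]
    have h := heven (m + 1) (Nat.le_add_left 1 m)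
    push_cast at h ⊢
    ring_nf at h ⊢
    exact h

/-- the convergents `h'_{-n} = A'_{-n}/B'_{-n}` of the continued fraction `H'`
form a strictly increasing sequence starting at `0`, bounded above by `1`, hence convergent. -/
theorem stmt4
    (aNeg cNeg : ℕ → ℝ)
    (haNeg : ∀ n : ℕ, 0 < aNeg n ∧ aNeg n < 1)
    (hcNeg : ∀ n : ℕ, 0 < cNeg n ∧ cNeg n < 1)
    (A B : ℤ → ℝ)
    (hA1 : A 1 = -1) (hA0 : A 0 = 0)
    (hB1 : B 1 = 0) (hB0 : B 0 = 1)
    (hAeven : ∀ n : ℕ, 1 ≤ n →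
      A (-(2 * (n : ℤ))) = A (-(2 * (n : ℤ)) + 1) - aNeg n * A (-(2 * (n : ℤ)) + 2))
    (hAodd : ∀ n : ℕ,
      A (-(2 * (n : ℤ)) - 1) = A (-(2 * (n : ℤ))) - cNeg n * A (-(2 * (n : ℤ)) + 1))
    (hBeven : ∀ n : ℕ, 1 ≤ n →
      B (-(2 * (n : ℤ))) = B (-(2 * (n : ℤ)) + 1) - aNeg n * B (-(2 * (n : ℤ)) + 2))
    (hBodd : ∀ n : ℕ,
      B (-(2 * (n : ℤ)) - 1) = B (-(2 * (n : ℤ))) - cNeg n * B (-(2 * (n : ℤ)) + 1))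
    (hAB : ∀ n : ℕ, 1 ≤ n → 0 < A (-(n : ℤ)) ∧ A (-(n : ℤ)) < B (-(n : ℤ))) :
    A 0 / B 0 = 0 ∧
    StrictMono (fun n : ℕ => A (-(n : ℤ)) / B (-(n : ℤ))) ∧
    (∀ n : ℕ, A (-(n : ℤ)) / B (-(n : ℤ)) < 1) ∧
    ∃ H' : ℝ, Tendsto (fun n : ℕ => A (-(n : ℤ)) / B (-(n : ℤ))) atTop (𝓝 H') := by
  have hB : ∀ n : ℕ, 0 < B (-(n : ℤ)) := fun n => by
    rcases Nat.eq_zero_or_pos n with rfl | hn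
    · simp [hB0]
    · exact (hAB n hn).1.trans (hAB n hn).2
  have hlt1 : ∀ n : ℕ, A (-(n : ℤ)) / B (-(n : ℤ)) < 1 := fun n => by
    rcases Nat.eq_zero_or_pos n with rfl | hn
    · simp [hA0, hB0]
    · exact (div_lt_one (hB n)).2 (hAB n hn).2
  have hW : ∀ n, 0 < casoratian (fun n : ℕ => A (1 - n)) (fun n : ℕ => B (1 - n)) n :=
    casoratian_pos (b := 1)
      (by simpa using recurrence_of_interlaced aNeg cNeg A hAeven hAodd)
      (by simpa using recurrence_of_interlaced aNeg cNeg B hBeven hBodd)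
      (by simp [casoratian, hA0, hA1, hB0, hB1])
      (interlace_pos (fun n => (hcNeg n).1) (fun n => (haNeg n).1))
  have hshift (n : ℕ) : (1 : ℤ) - (n + 1 : ℕ) = -n := by push_cast; ring
  have hmono : StrictMono fun n : ℕ => A (1 - (n + 1 : ℕ)) / B (1 - (n + 1 : ℕ)) :=
    strictMono_div_of_casoratian_pos (by simpa only [hshift] using hB) fun n => hW (n + 1)
  simp only [hshift] at hmono
  refine ⟨by simp [hA0, hB0], hmono, hlt1, _, tendsto_atTop_ciSup hmono.monotone ⟨1, ?_⟩⟩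
  rintro x ⟨n, rfl⟩
  exact (hlt1 n).le
end

section
/- Suppose the sequences (y_n), (s_n) for negative indices are generated from y_0 by s_0 = 1 - c_0/y_0 and y_{-n} = 1 - a_{-n}/s_{-n+1}, s_{-n} = 1 - c_{-n}/y_{-n} for n ≥ 1, where a_{-n}, c_{-n} ∈ (0,1). If all y_{-n}, s_{-n} lie in (0,1), then y_0 > h'_{-n} for every n ≥ 0, where h'_{-n} are the convergents of the continued fraction H' = c_0/(1 - a_{-1}/(1 - c_{-1}/(1 - ⋯))). Consequently y_0 ≥ H' whenever H' = lim h'_{-n} exists. -/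
open Filter Topology

/-- Auxiliary positivity lemma: any sequence satisfying the backward continued-fraction
recurrences with suitable initial conditions stays positive. -/
lemma cf_pos_aux (aNeg cNeg y s : ℕ → ℝ)
    (hyrec : ∀ n : ℕ, 1 ≤ n → y n = 1 - aNeg n / s (n - 1))
    (hsrec : ∀ n : ℕ, 1 ≤ n → s n = 1 - cNeg n / y n)
    (hy01 : ∀ n : ℕ, 0 < y n ∧ y n < 1)
    (hs01 : ∀ n : ℕ, 0 < s n ∧ s n < 1)
    (f : ℤ → ℝ)
    (hf0 : 0 < f 0)
    (hf1 : s 0 * f 0 ≤ f (-1))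
    (hfe : ∀ n : ℕ, 1 ≤ n →
      f (-(2 * (n : ℤ))) = f (-(2 * (n : ℤ)) + 1) - aNeg n * f (-(2 * (n : ℤ)) + 2))
    (hfo : ∀ n : ℕ, 1 ≤ n →
      f (-(2 * (n : ℤ)) - 1) = f (-(2 * (n : ℤ))) - cNeg n * f (-(2 * (n : ℤ)) + 1)) :
    ∀ n : ℕ, 0 < f (-(2 * (n : ℤ))) ∧ 0 < f (-(2 * (n : ℤ)) - 1) ∧
      s n * f (-(2 * (n : ℤ))) ≤ f (-(2 * (n : ℤ)) - 1) := by
  intro n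
  induction n with
  | zero =>
    have hs0 := hs01 0
    norm_num
    refine ⟨hf0, ?_, ?_⟩
    · have : 0 < s 0 * f 0 := mul_pos hs0.1 hf0
      linarith [hf1]
    · simpa using hf1
  | succ n ih =>
    obtain ⟨hE, hO, hSO⟩ := ih
    have hsn := hs01 n
    have hy := hy01 (n + 1)
    have hs := hs01 (n + 1)
    have hsne : s n ≠ 0 := ne_of_gt hsn.1
    have hyne : y (n + 1) ≠ 0 := ne_of_gt hy.1
    -- coefficient identities
    have ha : aNeg (n + 1) = s n * (1 - y (n + 1)) := by
      have h := hyrec (n + 1) (by omega)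
      rw [Nat.add_sub_cancel] at h
      field_simp at h
      linarith
    have hc : cNeg (n + 1) = y (n + 1) * (1 - s (n + 1)) := by
      have h := hsrec (n + 1) (by omega)
      field_simp at h
      linarith
    have he := hfe (n + 1) (by omega)
    have ho := hfo (n + 1) (by omega)
    push_cast at he ho ⊢
    have e1 : -(2 * ((n : ℤ) + 1)) + 1 = -(2 * (n : ℤ)) - 1 := by ring
    have e2 : -(2 * ((n : ℤ) + 1)) + 2 = -(2 * (n : ℤ)) := by ring
    rw [e1, e2] at he
    rw [e1] at ho
    -- even step
    have hyE : y (n + 1) * f (-(2 * (n : ℤ)) - 1) ≤ f (-(2 * ((n : ℤ) + 1))) := by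
      rw [he, ha]
      nlinarith [mul_nonneg (le_of_lt (by linarith : (0:ℝ) < 1 - y (n + 1)))
        (by linarith : (0:ℝ) ≤ f (-(2 * (n : ℤ)) - 1) - s n * f (-(2 * (n : ℤ))))]
    have hE' : 0 < f (-(2 * ((n : ℤ) + 1))) :=
      lt_of_lt_of_le (mul_pos hy.1 hO) hyE
    -- odd step
    have hSO' : s (n + 1) * f (-(2 * ((n : ℤ) + 1))) ≤ f (-(2 * ((n : ℤ) + 1)) - 1) := by
      rw [ho, hc]
      nlinarith [mul_nonneg (le_of_lt (by linarith : (0:ℝ) < 1 - s (n + 1)))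
        (by linarith : (0:ℝ) ≤ f (-(2 * ((n : ℤ) + 1))) - y (n + 1) * f (-(2 * (n : ℤ)) - 1))]
    have hO' : 0 < f (-(2 * ((n : ℤ) + 1)) - 1) :=
      lt_of_lt_of_le (mul_pos hs.1 hE') hSO'
    exact ⟨hE', hO', hSO'⟩

/-- if the backward UL-recursion starting from `y 0` produces coefficients
`y_{-n}, s_{-n}` all in `(0,1)`, then `y 0` dominates every convergent `h'_{-n}` of the
continued fraction `H'`, and hence `y 0 ≥ H'` whenever the limit `H'` exists.
Here `y n` stands for `y_{-n}`, `s n` for `s_{-n}`, `aNeg n` for `a_{-n}`, `cNeg n` for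
`c_{-n}`. -/
theorem stmt5
    (aNeg cNeg : ℕ → ℝ)
    (haNeg : ∀ n : ℕ, 0 < aNeg n ∧ aNeg n < 1)
    (hcNeg : ∀ n : ℕ, 0 < cNeg n ∧ cNeg n < 1)
    (y s : ℕ → ℝ)
    (hs0 : s 0 = 1 - cNeg 0 / y 0)
    (hyrec : ∀ n : ℕ, 1 ≤ n → y n = 1 - aNeg n / s (n - 1))
    (hsrec : ∀ n : ℕ, 1 ≤ n → s n = 1 - cNeg n / y n)
    (hy01 : ∀ n : ℕ, 0 < y n ∧ y n < 1)
    (hs01 : ∀ n : ℕ, 0 < s n ∧ s n < 1)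
    (A B : ℤ → ℝ)
    (hA1 : A 1 = -1) (hA0 : A 0 = 0)
    (hB1 : B 1 = 0) (hB0 : B 0 = 1)
    (hAeven : ∀ n : ℕ, 1 ≤ n →
      A (-(2 * (n : ℤ))) = A (-(2 * (n : ℤ)) + 1) - aNeg n * A (-(2 * (n : ℤ)) + 2))
    (hAodd : ∀ n : ℕ,
      A (-(2 * (n : ℤ)) - 1) = A (-(2 * (n : ℤ))) - cNeg n * A (-(2 * (n : ℤ)) + 1))
    (hBeven : ∀ n : ℕ, 1 ≤ n →
      B (-(2 * (n : ℤ))) = B (-(2 * (n : ℤ)) + 1) - aNeg n * B (-(2 * (n : ℤ)) + 2))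
    (hBodd : ∀ n : ℕ,
      B (-(2 * (n : ℤ)) - 1) = B (-(2 * (n : ℤ))) - cNeg n * B (-(2 * (n : ℤ)) + 1)) :
    (∀ n : ℕ, A (-(n : ℤ)) / B (-(n : ℤ)) < y 0) ∧
    (∀ H' : ℝ,
      Tendsto (fun n : ℕ => A (-(n : ℤ)) / B (-(n : ℤ))) atTop (𝓝 H') → H' ≤ y 0) := by
  have hy0 := hy01 0
  have hs0pos := hs01 0
  have hy0ne : y 0 ≠ 0 := ne_of_gt hy0.1
  -- values at index -1
  have hBm1 : B (-1) = 1 := by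
    have h := hBodd 0
    norm_num at h
    rw [h, hB1, hB0]; ring
  have hAm1 : A (-1) = cNeg 0 := by
    have h := hAodd 0
    norm_num at h
    rw [h, hA1, hA0]; ring
  -- positivity of B at all nonpositive indices
  have hBpos2 := cf_pos_aux aNeg cNeg y s hyrec hsrec hy01 hs01 B
    (by rw [hB0]; norm_num)
    (by rw [hBm1, hB0]; nlinarith [hs0pos.2])
    hBeven (fun n _ => hBodd n)
  -- positivity of the "defect" y 0 * B - A at all nonpositive indices
  have hDpos2 := cf_pos_aux aNeg cNeg y s hyrec hsrec hy01 hs01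
    (fun k => y 0 * B k - A k)
    (by simp only [hB0, hA0]; linarith [hy0.1])
    (by
      simp only [hBm1, hAm1, hB0, hA0]
      have : s 0 * y 0 = y 0 - cNeg 0 := by
        rw [hs0]; field_simp
      nlinarith)
    (fun n hn => by rw [hAeven n hn, hBeven n hn]; ring)
    (fun n _ => by rw [hAodd n, hBodd n]; ring)
  -- positivity at every nonpositive index, by parity
  have hBpos : ∀ k : ℕ, 0 < B (-(k : ℤ)) := by
    intro k
    rcases Nat.even_or_odd k with ⟨m, hm⟩ | ⟨m, hm⟩
    · have : -((k : ℤ)) = -(2 * (m : ℤ)) := by subst hm; push_cast; ring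
      rw [this]; exact (hBpos2 m).1
    · have : -((k : ℤ)) = -(2 * (m : ℤ)) - 1 := by subst hm; push_cast; ring
      rw [this]; exact (hBpos2 m).2.1
  have hDpos : ∀ k : ℕ, 0 < y 0 * B (-(k : ℤ)) - A (-(k : ℤ)) := by
    intro k
    rcases Nat.even_or_odd k with ⟨m, hm⟩ | ⟨m, hm⟩
    · have : -((k : ℤ)) = -(2 * (m : ℤ)) := by subst hm; push_cast; ring
      rw [this]; exact (hDpos2 m).1
    · have : -((k : ℤ)) = -(2 * (m : ℤ)) - 1 := by subst hm; push_cast; ring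
      rw [this]; exact (hDpos2 m).2.1
  have main : ∀ n : ℕ, A (-(n : ℤ)) / B (-(n : ℤ)) < y 0 := by
    intro n
    rw [div_lt_iff₀ (hBpos n)]
    linarith [hDpos n]
  refine ⟨main, fun H' hH => ?_⟩
  exact le_of_tendsto hH (Eventually.of_forall fun n => (main n).le)
end

section
/- With S_n^α(x) as above satisfying x Q_n^α(x) = x_n S_{n+1}^α(x) + y_n S_n^α(x) and the evaluation identities S_{n+1}^α(0) = -(y_n/x_n) S_n^α(0), one has for n ≥ 1 the summation formula S_n^α(x) = S_n^α(0) [1 + x ∑_{j=0}^{n-1} Q_j^α(x)/(S_{j+1}^α(0) x_j)], provided S_{j+1}^α(0) ≠ 0 and x_j ≠ 0 for 0 ≤ j ≤ n-1. -/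
open Polynomial

/-- the summation formula
`S n = S n(0) * (1 + X * ∑_{j<n} Q j / (S (j+1)(0) * x j))` for `n ≥ 1`, derived from the
relation `X * Q n = x n • S (n+1) + y n • S n`, the evaluation identity
`S (n+1)(0) = -(y n / x n) * S n(0)`, and `S 0` being a constant polynomial. -/
theorem stmt9
    (x y : ℤ → ℝ)
    (Q S : ℤ → Polynomial ℝ)
    (hS0const : S 0 = C ((S 0).eval 0))
    (hrel : ∀ n : ℤ, X * Q n = C (x n) * S (n + 1) + C (y n) * S n)
    (heval : ∀ n : ℤ, (S (n + 1)).eval 0 = -(y n / x n) * (S n).eval 0)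
    (hSne : ∀ j : ℕ, (S ((j : ℤ) + 1)).eval 0 ≠ 0)
    (hxne : ∀ j : ℕ, x (j : ℤ) ≠ 0) :
    ∀ n : ℕ, 1 ≤ n →
      S (n : ℤ) = C ((S (n : ℤ)).eval 0) *
        (1 + X * ∑ j ∈ Finset.range n,
          C (1 / ((S ((j : ℤ) + 1)).eval 0 * x (j : ℤ))) * Q (j : ℤ)) := by
  have hS0ne : (S 0).eval 0 ≠ 0 := by
    intro h
    have h1 := heval 0
    rw [h, mul_zero] at h1
    exact hSne 0 (by simpa using h1)
  have hSne' : ∀ n : ℕ, (S (n : ℤ)).eval 0 ≠ 0 := by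
    intro n
    cases n with
    | zero => simpa using hS0ne
    | succ m => simpa [Nat.cast_succ] using hSne m
  -- recursion in solved form
  have key : ∀ n : ℕ, S ((n : ℤ) + 1) =
      C (1 / x n) * (X * Q n) +
        C ((S ((n : ℤ) + 1)).eval 0 / (S (n : ℤ)).eval 0) * S n := by
    intro n
    have h := hrel (n : ℤ)
    have hx := hxne n
    have hs := hSne' n
    have hratio : (S ((n : ℤ) + 1)).eval 0 / (S (n : ℤ)).eval 0 = -(y n / x n) := by
      rw [heval (n : ℤ)]
      field_simp
    rw [hratio]
    have h3 : C (1 / x (n : ℤ)) * C (x (n : ℤ)) = 1 := by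
      rw [← C_mul]; field_simp; rw [C_1]
    have h4 : C (-(y (n : ℤ) / x (n : ℤ))) = C (1 / x (n : ℤ)) * C (-(y (n : ℤ))) := by
      rw [← C_mul]; congr 1; field_simp
    rw [h4]
    calc S ((n : ℤ) + 1) = C (1 / x n) * C (x n) * S ((n : ℤ) + 1) := by rw [h3, one_mul]
      _ = C (1 / x n) * (C (x n) * S ((n : ℤ) + 1)) := by ring
      _ = C (1 / x n) * (X * Q n - C (y n) * S n) := by rw [h]; ring_nf
      _ = C (1 / x n) * (X * Q n) + C (1 / x n) * C (-(y n)) * S n := by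
          rw [map_neg]; ring
  intro n hn
  induction n, hn using Nat.le_induction with
  | base =>
    simp only [Nat.cast_one, Nat.cast_zero, Finset.sum_range_one, zero_add]
    have h1 := key 0
    have h0 := hSne 0
    have hx := hxne 0
    simp only [Nat.cast_zero, zero_add] at h1 h0 hx
    have hb : C ((S 1).eval 0 / (S 0).eval 0) * C ((S 0).eval 0) = C ((S 1).eval 0) := by
      rw [← C_mul, div_mul_cancel₀ _ hS0ne]
    have hc : C ((S 1).eval 0) * C (1 / ((S 1).eval 0 * x 0)) = C (1 / x 0) := by
      rw [← C_mul]; congr 1; field_simp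
    linear_combination h1 + C ((S 1).eval 0 / (S 0).eval 0) * hS0const + hb - (X * Q 0) * hc
  | succ n hn ih =>
    push_cast
    rw [Finset.sum_range_succ]
    have hx := hxne n
    have hA := hSne n
    have hB := hSne' n
    have hb : C ((S ((n : ℤ) + 1)).eval 0 / (S (n : ℤ)).eval 0) * C ((S (n : ℤ)).eval 0)
        = C ((S ((n : ℤ) + 1)).eval 0) := by
      rw [← C_mul, div_mul_cancel₀ _ hB]
    have hc : C ((S ((n : ℤ) + 1)).eval 0) * C (1 / ((S ((n : ℤ) + 1)).eval 0 * x n))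
        = C (1 / x (n : ℤ)) := by
      rw [← C_mul]; congr 1; field_simp
    linear_combination key n + C ((S ((n : ℤ) + 1)).eval 0 / (S (n : ℤ)).eval 0) * ih
      + (1 + X * ∑ j ∈ Finset.range n,
          C (1 / ((S ((j : ℤ) + 1)).eval 0 * x (j : ℤ))) * Q (j : ℤ)) * hb
      - (X * Q (n : ℤ)) * hc
end

section
/- For the random walk on ℤ with constant probabilities a_n = a, b_n = b, c_n = c (a + b + c = 1, a, c > 0) and a ≤ (1-√c)², the continued fraction H = 1 - a/(1 - c/(1 - a/(1 - c/⋯))) equals ½(1 + c - a + √((1+c-a)² - 4c)), and H' = c/H = ½(1 + c - a - √((1+c-a)² - 4c)). Moreover 0 ≤ H' ≤ H ≤ 1. -/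
open Filter Topology

private lemma tendsto_even_odd {f : ℕ → ℝ} {l : ℝ}
    (h1 : Tendsto (fun k => f (2*k)) atTop (𝓝 l))
    (h2 : Tendsto (fun k => f (2*k+1)) atTop (𝓝 l)) :
    Tendsto f atTop (𝓝 l) := by
  rw [Metric.tendsto_atTop] at h1 h2 ⊢
  intro ε hε
  obtain ⟨N1, hN1⟩ := h1 ε hε
  obtain ⟨N2, hN2⟩ := h2 ε hε
  refine ⟨2*(N1+N2)+2, fun n hn => ?_⟩
  rcases Nat.even_or_odd n with ⟨k, hk⟩ | ⟨k, hk⟩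
  · have hk' : n = 2*k := by omega
    rw [hk']; exact hN1 k (by omega)
  · have hk' : n = 2*k+1 := by omega
    rw [hk']; exact hN2 k (by omega)

private lemma tendsto_aux (x k d : ℝ) :
    Tendsto (fun n : ℕ => x + k * ((n:ℝ)+d)⁻¹) atTop (𝓝 x) := by
  have h1 : Tendsto (fun n : ℕ => ((n:ℝ)+d)) atTop atTop :=
    tendsto_atTop_add_const_right atTop d tendsto_natCast_atTop_atTop
  have h2 := (h1.inv_tendsto_atTop).const_mul k
  simpa using tendsto_const_nhds.add h2

set_option maxHeartbeats 1000000 in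
/-- for the random walk on `ℤ` with constant probabilities `a, b, c`
(`a + b + c = 1`, `a, c > 0`, `b ≥ 0`) and `a ≤ (1 - √c)²`, the continued fraction
`H = 1 - a/(1 - c/(1 - a/(1 - ⋯)))` (limit of the convergents `A n / B n`) equals
`½(1 + c - a + √((1+c-a)² - 4c))`, and
`H' = c/H = ½(1 + c - a - √((1+c-a)² - 4c))` (limit of the convergents `A' (-n)/B' (-n)`),
with `0 ≤ H' ≤ H ≤ 1`. -/
theorem stmt10
    (a b c : ℝ) (ha : 0 < a) (hc : 0 < c) (hb : 0 ≤ b) (habc : a + b + c = 1)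
    (hconv : a ≤ (1 - Real.sqrt c) ^ 2)
    (A B A' B' : ℤ → ℝ)
    (hAm1 : A (-1) = 1) (hA0 : A 0 = 1) (hBm1 : B (-1) = 0) (hB0 : B 0 = 1)
    (hAeven : ∀ n : ℕ, 1 ≤ n →
      A (2 * (n : ℤ)) = A (2 * (n : ℤ) - 1) - c * A (2 * (n : ℤ) - 2))
    (hAodd : ∀ n : ℕ, A (2 * (n : ℤ) + 1) = A (2 * (n : ℤ)) - a * A (2 * (n : ℤ) - 1))
    (hBeven : ∀ n : ℕ, 1 ≤ n →
      B (2 * (n : ℤ)) = B (2 * (n : ℤ) - 1) - c * B (2 * (n : ℤ) - 2))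
    (hBodd : ∀ n : ℕ, B (2 * (n : ℤ) + 1) = B (2 * (n : ℤ)) - a * B (2 * (n : ℤ) - 1))
    (hA'1 : A' 1 = -1) (hA'0 : A' 0 = 0) (hB'1 : B' 1 = 0) (hB'0 : B' 0 = 1)
    (hA'even : ∀ n : ℕ, 1 ≤ n →
      A' (-(2 * (n : ℤ))) = A' (-(2 * (n : ℤ)) + 1) - a * A' (-(2 * (n : ℤ)) + 2))
    (hA'odd : ∀ n : ℕ,
      A' (-(2 * (n : ℤ)) - 1) = A' (-(2 * (n : ℤ))) - c * A' (-(2 * (n : ℤ)) + 1))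
    (hB'even : ∀ n : ℕ, 1 ≤ n →
      B' (-(2 * (n : ℤ))) = B' (-(2 * (n : ℤ)) + 1) - a * B' (-(2 * (n : ℤ)) + 2))
    (hB'odd : ∀ n : ℕ,
      B' (-(2 * (n : ℤ)) - 1) = B' (-(2 * (n : ℤ))) - c * B' (-(2 * (n : ℤ)) + 1)) :
    let H : ℝ := (1 + c - a + Real.sqrt ((1 + c - a) ^ 2 - 4 * c)) / 2
    let H' : ℝ := (1 + c - a - Real.sqrt ((1 + c - a) ^ 2 - 4 * c)) / 2
    Tendsto (fun n : ℕ => A (n : ℤ) / B (n : ℤ)) atTop (𝓝 H) ∧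
    Tendsto (fun n : ℕ => A' (-(n : ℤ)) / B' (-(n : ℤ))) atTop (𝓝 H') ∧
    H' = c / H ∧ 0 ≤ H' ∧ H' ≤ H ∧ H ≤ 1 := by
  intro H H'
  have hHdef : H = (1 + c - a + Real.sqrt ((1 + c - a) ^ 2 - 4 * c)) / 2 := rfl
  have hH'def : H' = (1 + c - a - Real.sqrt ((1 + c - a) ^ 2 - 4 * c)) / 2 := rfl
  set s : ℝ := Real.sqrt ((1 + c - a) ^ 2 - 4 * c) with hs_def
  have hc1 : c < 1 := by linarith
  have hsq : Real.sqrt c ^ 2 = c := Real.sq_sqrt hc.le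
  have hsqnn : 0 ≤ Real.sqrt c := Real.sqrt_nonneg c
  have hsqpos : 0 < Real.sqrt c := Real.sqrt_pos.2 hc
  have hD : 0 ≤ (1 + c - a) ^ 2 - 4 * c := by nlinarith [hconv, hsq, hsqnn]
  have hs0 : 0 ≤ s := Real.sqrt_nonneg _
  have hs2 : s ^ 2 = (1 + c - a) ^ 2 - 4 * c := Real.sq_sqrt hD
  have hsum : H + H' = 1 + c - a := by rw [hHdef, hH'def]; ring
  have hdiff : H - H' = s := by rw [hHdef, hH'def]; ring
  have hprod : H * H' = c := by
    rw [hHdef, hH'def]; linear_combination (-1/4 : ℝ) * hs2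
  have hHpos : 0 < H := by rw [hHdef]; nlinarith [hconv, hsq, hsqpos, hs0]
  have hH1 : H < 1 := by rw [hHdef]; nlinarith [hs2, hs0, ha, hc1]
  have hH'eq : H' = c / H := by
    rw [eq_div_iff hHpos.ne']; linear_combination hprod
  have hH'pos : 0 < H' := by rw [hH'eq]; positivity
  have hle : H' ≤ H := by linarith
  have hH'1 : H' < 1 := lt_of_le_of_lt hle hH1
  have h1H : 0 < 1 - H := by linarith
  have h1H' : 0 < 1 - H' := by linarith
  set L : ℝ := H * (1 - H') with hLdef
  set M : ℝ := H' * (1 - H) with hMdef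
  have hLc : L = H - c := by rw [hLdef]; linear_combination -hprod
  have hMc : M = H' - c := by rw [hMdef]; linear_combination -hprod
  have hLpos : 0 < L := mul_pos hHpos h1H'
  have hMpos : 0 < M := mul_pos hH'pos h1H
  have hML : L - M = s := by rw [hLc, hMc]; linear_combination hdiff
  have haHH : a = (1 - H) * (1 - H') := by linear_combination hsum - hprod
  clear_value s L M H H'
  -- normalized recurrences
  have rA1 : ∀ n : ℕ, A (2*(n:ℤ)+2) = A (2*(n:ℤ)+1) - c * A (2*(n:ℤ)) := by
    intro n
    have h := hAeven (n+1) (by omega)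
    push_cast at h
    rw [show (2*((n:ℤ)+1) : ℤ) = 2*(n:ℤ)+2 by ring] at h
    rw [show (2*(n:ℤ)+2-1 : ℤ) = 2*(n:ℤ)+1 by ring,
      show (2*(n:ℤ)+2-2 : ℤ) = 2*(n:ℤ) by ring] at h
    exact h
  have rB1 : ∀ n : ℕ, B (2*(n:ℤ)+2) = B (2*(n:ℤ)+1) - c * B (2*(n:ℤ)) := by
    intro n
    have h := hBeven (n+1) (by omega)
    push_cast at h
    rw [show (2*((n:ℤ)+1) : ℤ) = 2*(n:ℤ)+2 by ring] at h
    rw [show (2*(n:ℤ)+2-1 : ℤ) = 2*(n:ℤ)+1 by ring,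
      show (2*(n:ℤ)+2-2 : ℤ) = 2*(n:ℤ) by ring] at h
    exact h
  have rA2 : ∀ n : ℕ, A (2*(n:ℤ)+3) = A (2*(n:ℤ)+2) - a * A (2*(n:ℤ)+1) := by
    intro n
    have h := hAodd (n+1)
    push_cast at h
    rw [show (2*((n:ℤ)+1) : ℤ) = 2*(n:ℤ)+2 by ring] at h
    rw [show (2*(n:ℤ)+2+1 : ℤ) = 2*(n:ℤ)+3 by ring,
      show (2*(n:ℤ)+2-1 : ℤ) = 2*(n:ℤ)+1 by ring] at h
    exact h
  have rB2 : ∀ n : ℕ, B (2*(n:ℤ)+3) = B (2*(n:ℤ)+2) - a * B (2*(n:ℤ)+1) := by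
    intro n
    have h := hBodd (n+1)
    push_cast at h
    rw [show (2*((n:ℤ)+1) : ℤ) = 2*(n:ℤ)+2 by ring] at h
    rw [show (2*(n:ℤ)+2+1 : ℤ) = 2*(n:ℤ)+3 by ring,
      show (2*(n:ℤ)+2-1 : ℤ) = 2*(n:ℤ)+1 by ring] at h
    exact h
  have hA1 : A 1 = 1 - a := by
    have h := hAodd 0
    norm_num at h
    rw [h, hA0, hAm1]; ring
  have hB1 : B 1 = 1 := by
    have h := hBodd 0
    norm_num at h
    rw [h, hB0, hBm1]; ring
  have rA'e : ∀ n : ℕ, A' (-(2*(n:ℤ))-2) = A' (-(2*(n:ℤ))-1) - a * A' (-(2*(n:ℤ))) := by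
    intro n
    have h := hA'even (n+1) (by omega)
    push_cast at h
    rw [show (-(2*((n:ℤ)+1)) : ℤ) = -(2*(n:ℤ))-2 by ring] at h
    rw [show (-(2*(n:ℤ))-2+1 : ℤ) = -(2*(n:ℤ))-1 by ring,
      show (-(2*(n:ℤ))-2+2 : ℤ) = -(2*(n:ℤ)) by ring] at h
    exact h
  have rB'e : ∀ n : ℕ, B' (-(2*(n:ℤ))-2) = B' (-(2*(n:ℤ))-1) - a * B' (-(2*(n:ℤ))) := by
    intro n
    have h := hB'even (n+1) (by omega)
    push_cast at h
    rw [show (-(2*((n:ℤ)+1)) : ℤ) = -(2*(n:ℤ))-2 by ring] at h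
    rw [show (-(2*(n:ℤ))-2+1 : ℤ) = -(2*(n:ℤ))-1 by ring,
      show (-(2*(n:ℤ))-2+2 : ℤ) = -(2*(n:ℤ)) by ring] at h
    exact h
  have rA'o : ∀ n : ℕ, A' (-(2*(n:ℤ))-3) = A' (-(2*(n:ℤ))-2) - c * A' (-(2*(n:ℤ))-1) := by
    intro n
    have h := hA'odd (n+1)
    push_cast at h
    rw [show (-(2*((n:ℤ)+1)) - 1 : ℤ) = -(2*(n:ℤ))-3 by ring] at h
    rw [show (-(2*((n:ℤ)+1)) : ℤ) = -(2*(n:ℤ))-2 by ring] at h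
    rw [show (-(2*(n:ℤ))-2+1 : ℤ) = -(2*(n:ℤ))-1 by ring] at h
    exact h
  have rB'o : ∀ n : ℕ, B' (-(2*(n:ℤ))-3) = B' (-(2*(n:ℤ))-2) - c * B' (-(2*(n:ℤ))-1) := by
    intro n
    have h := hB'odd (n+1)
    push_cast at h
    rw [show (-(2*((n:ℤ)+1)) - 1 : ℤ) = -(2*(n:ℤ))-3 by ring] at h
    rw [show (-(2*((n:ℤ)+1)) : ℤ) = -(2*(n:ℤ))-2 by ring] at h
    rw [show (-(2*(n:ℤ))-2+1 : ℤ) = -(2*(n:ℤ))-1 by ring] at h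
    exact h
  have hA'm1 : A' (-1) = c := by
    have h := hA'odd 0
    norm_num at h
    rw [h, hA'0, hA'1]; ring
  have hB'm1 : B' (-1) = 1 := by
    have h := hB'odd 0
    norm_num at h
    rw [h, hB'0, hB'1]; ring
  -- key closed forms
  have keyPQ : ∀ n : ℕ,
      A (2*(n:ℤ)) - H * B (2*(n:ℤ)) = (1-H) * M^n ∧
      A (2*(n:ℤ)+1) - H * B (2*(n:ℤ)+1) = H' * (1-H) * M^n ∧
      A (2*(n:ℤ)) - H' * B (2*(n:ℤ)) = (1-H') * L^n ∧
      A (2*(n:ℤ)+1) - H' * B (2*(n:ℤ)+1) = H * (1-H') * L^n := by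
    intro n
    induction n with
    | zero =>
      norm_num [hA0, hB0, hA1, hB1]
      refine ⟨by linear_combination hprod - hsum, by linear_combination hprod - hsum⟩
    | succ n ih =>
      obtain ⟨ih1, ih2, ih3, ih4⟩ := ih
      have e2 : (2*(((n:ℕ)+1:ℕ)):ℤ) = 2*(n:ℤ)+2 := by push_cast; ring
      have e3 : (2*(((n:ℕ)+1:ℕ)):ℤ)+1 = 2*(n:ℤ)+3 := by push_cast; ring
      rw [e3, e2]
      have f1 : A (2*(n:ℤ)+2) - H * B (2*(n:ℤ)+2) = (1-H) * M^(n+1) := by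
        rw [rA1 n, rB1 n]
        linear_combination ih2 - c * ih1 - (1-H) * M^n * hMc
      have f2 : A (2*(n:ℤ)+2) - H' * B (2*(n:ℤ)+2) = (1-H') * L^(n+1) := by
        rw [rA1 n, rB1 n]
        linear_combination ih4 - c * ih3 - (1-H') * L^n * hLc
      have f3 : A (2*(n:ℤ)+3) - H * B (2*(n:ℤ)+3) = H' * (1-H) * M^(n+1) := by
        rw [rA2 n, rB2 n]
        linear_combination f1 - a * ih2 + (1-H)*M^n*(1-H')*hMdef - (1-H)*M^n*H'*haHH
      have f4 : A (2*(n:ℤ)+3) - H' * B (2*(n:ℤ)+3) = H * (1-H') * L^(n+1) := by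
        rw [rA2 n, rB2 n]
        linear_combination f2 - a * ih4 + (1-H')*L^n*(1-H)*hLdef - (1-H')*L^n*H*haHH
      exact ⟨f1, f3, f2, f4⟩
  have keyPQ' : ∀ n : ℕ,
      A' (-(2*(n:ℤ))) - H * B' (-(2*(n:ℤ))) = -(H * L^n) ∧
      A' (-(2*(n:ℤ))-1) - H * B' (-(2*(n:ℤ))-1) = -(L^(n+1)) ∧
      A' (-(2*(n:ℤ))) - H' * B' (-(2*(n:ℤ))) = -(H' * M^n) ∧
      A' (-(2*(n:ℤ))-1) - H' * B' (-(2*(n:ℤ))-1) = -(M^(n+1)) := by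
    intro n
    induction n with
    | zero =>
      norm_num [hA'0, hB'0, hA'm1, hB'm1]
      refine ⟨by linear_combination hLc, by linear_combination hMc⟩
    | succ n ih =>
      obtain ⟨ih1, ih2, ih3, ih4⟩ := ih
      have e2 : (-(2*(((n:ℕ)+1:ℕ)):ℤ)) = -(2*(n:ℤ))-2 := by push_cast; ring
      have e3 : (-(2*(((n:ℕ)+1:ℕ)):ℤ))-1 = -(2*(n:ℤ))-3 := by push_cast; ring
      rw [e3, e2]
      have f1 : A' (-(2*(n:ℤ))-2) - H * B' (-(2*(n:ℤ))-2) = -(H * L^(n+1)) := by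
        rw [rA'e n, rB'e n]
        linear_combination ih2 - a * ih1 + H*L^n*haHH - (1-H)*L^n*hLdef
      have f2 : A' (-(2*(n:ℤ))-3) - H * B' (-(2*(n:ℤ))-3) = -(L^(n+2)) := by
        rw [rA'o n, rB'o n]
        linear_combination f1 - c * ih2 + L^(n+1) * hLc
      have f3 : A' (-(2*(n:ℤ))-2) - H' * B' (-(2*(n:ℤ))-2) = -(H' * M^(n+1)) := by
        rw [rA'e n, rB'e n]
        linear_combination ih4 - a * ih3 + H'*M^n*haHH - (1-H')*M^n*hMdef
      have f4 : A' (-(2*(n:ℤ))-3) - H' * B' (-(2*(n:ℤ))-3) = -(M^(n+2)) := by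
        rw [rA'o n, rB'o n]
        linear_combination f3 - c * ih4 + M^(n+1) * hMc
      exact ⟨f1, f2, f3, f4⟩
  have glue1 : ∀ T : ℝ, Tendsto (fun k : ℕ => A (2*(k:ℤ)) / B (2*(k:ℤ))) atTop (𝓝 T) →
      Tendsto (fun k : ℕ => A (2*(k:ℤ)+1) / B (2*(k:ℤ)+1)) atTop (𝓝 T) →
      Tendsto (fun n : ℕ => A (n : ℤ) / B (n : ℤ)) atTop (𝓝 T) := by
    intro T te tod
    refine tendsto_even_odd (te.congr fun k => ?_) (tod.congr fun k => ?_)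
    · norm_num
    · have e : ((2*k+1 : ℕ) : ℤ) = 2*(k:ℤ)+1 := by push_cast; ring
      rw [e]
  have glue2 : ∀ T : ℝ, Tendsto (fun k : ℕ => A' (-(2*(k:ℤ))) / B' (-(2*(k:ℤ)))) atTop (𝓝 T) →
      Tendsto (fun k : ℕ => A' (-(2*(k:ℤ))-1) / B' (-(2*(k:ℤ))-1)) atTop (𝓝 T) →
      Tendsto (fun n : ℕ => A' (-(n : ℤ)) / B' (-(n : ℤ))) atTop (𝓝 T) := by
    intro T te tod
    refine tendsto_even_odd (te.congr fun k => ?_) (tod.congr fun k => ?_)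
    · norm_num
    · have e : (-((2*k+1 : ℕ) : ℤ)) = -(2*(k:ℤ))-1 := by push_cast; ring
      rw [e]
  refine ⟨?_, ?_, hH'eq, hH'pos.le, hle, hH1.le⟩
  · -- unprimed limit
    rcases eq_or_lt_of_le hs0 with hs | hs
    · -- degenerate case s = 0
      replace hs : s = 0 := hs.symm
      have hHH' : H = H' := by linarith
      have hc2 : c = H^2 := by rw [← hprod, hHH']; ring
      have hL2 : L = H - H^2 := by rw [hLc, hc2]
      have ha2 : a = (1-H)^2 := by rw [haHH, ← hHH']; ring
      have hLM : M = L := by rw [hMc, hLc, hHH']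
      have hMLk : ∀ k : ℕ, M^k = L^k := fun k => by rw [hLM]
      have hBdeg : ∀ k : ℕ, H * B (2*(k:ℤ)) = (H + (k:ℝ)) * L^k ∧
          H * B (2*(k:ℤ)+1) = H * ((k:ℝ)+1) * L^k := by
        intro k
        induction k with
        | zero => norm_num [hB0, hB1]
        | succ k ih =>
          obtain ⟨ih1, ih2⟩ := ih
          have e3 : (2*(((k:ℕ)+1:ℕ)):ℤ)+1 = 2*(k:ℤ)+3 := by push_cast; ring
          have e2 : (2*(((k:ℕ)+1:ℕ)):ℤ) = 2*(k:ℤ)+2 := by push_cast; ring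
          rw [e3, e2]
          push_cast
          have f1 : H * B (2*(k:ℤ)+2) = (H + ((k:ℝ)+1)) * L^(k+1) := by
            rw [rB1 k]
            linear_combination ih2 - c * ih1 - (H+(k:ℝ)+1)*L^k*hLc + L^k*hc2
          have f2 : H * B (2*(k:ℤ)+3) = H * (((k:ℝ)+1)+1) * L^(k+1) := by
            rw [rB2 k]
            linear_combination f1 - a * ih2 + ((k:ℝ)+1)*L^k*(1-H)*hL2 - ((k:ℝ)+1)*L^k*H*ha2
          exact ⟨f1, f2⟩
      have hAe : ∀ k : ℕ, A (2*(k:ℤ)) = ((k:ℝ)+1) * L^k := by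
        intro k
        linear_combination (keyPQ k).1 + (hBdeg k).1 + (1-H) * hMLk k
      have hAo : ∀ k : ℕ, A (2*(k:ℤ)+1) = H * ((k:ℝ)+2-H) * L^k := by
        intro k
        linear_combination (keyPQ k).2.1 + (hBdeg k).2 + H' * (1-H) * hMLk k - (1-H)*L^k*hHH'
      have hBev : ∀ k : ℕ, B (2*(k:ℤ)) = (H + (k:ℝ)) * L^k / H := fun k => by
        rw [eq_div_iff hHpos.ne']; linear_combination (hBdeg k).1
      have hBod : ∀ k : ℕ, B (2*(k:ℤ)+1) = ((k:ℝ)+1) * L^k := fun k => by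
        have h := (hBdeg k).2
        have := mul_left_cancel₀ hHpos.ne' (h.trans (by ring : H * ((k:ℝ)+1) * L^k = H * (((k:ℝ)+1) * L^k)))
        exact this
      apply glue1
      · refine Tendsto.congr (fun k => ?_) (tendsto_aux H (H*(1-H)) H)
        rw [hAe k, hBev k]
        have hk : (0:ℝ) < (k:ℝ) + H := add_pos_of_nonneg_of_pos (Nat.cast_nonneg k) hHpos
        have hk2 : (0:ℝ) < H + (k:ℝ) := by linarith
        have hLk : L^k ≠ 0 := (pow_pos hLpos k).ne'
        field_simp [hHpos.ne', hk.ne', hk2.ne', hLk]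
        ring
      · refine Tendsto.congr (fun k => ?_) (tendsto_aux H (H*(1-H)) 1)
        rw [hAo k, hBod k]
        have hk : (0:ℝ) < (k:ℝ) + 1 := by positivity
        have hLk : L^k ≠ 0 := (pow_pos hLpos k).ne'
        field_simp [hk.ne', hLk]
        ring
    · -- nondegenerate case 0 < s
      have hH'H : H' < H := by linarith
      set r : ℝ := M / L with hrdef
      have hr0 : 0 ≤ r := div_nonneg hMpos.le hLpos.le
      have hr1 : r < 1 := (div_lt_one hLpos).2 (by linarith)
      have hrpow : Tendsto (fun k : ℕ => r ^ k) atTop (𝓝 0) :=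
        tendsto_pow_atTop_nhds_zero_of_lt_one hr0 hr1
      have hMr : ∀ k : ℕ, M ^ k = r ^ k * L ^ k := by
        intro k; rw [hrdef, div_pow, div_mul_cancel₀]
        exact pow_ne_zero _ hLpos.ne'
      have hrk1 : ∀ k : ℕ, r ^ k ≤ 1 := fun k => pow_le_one₀ hr0 hr1.le
      have hBe : ∀ k : ℕ, B (2*(k:ℤ)) = ((1-H') - (1-H)*r^k) * L^k / s := by
        intro k
        rw [eq_div_iff hs.ne']
        linear_combination (keyPQ k).2.2.1 - (keyPQ k).1 - B (2*(k:ℤ)) * hdiff - (1-H) * hMr k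
      have hAe : ∀ k : ℕ, A (2*(k:ℤ)) = (H*(1-H') - H'*(1-H)*r^k) * L^k / s := by
        intro k
        rw [eq_div_iff hs.ne']
        linear_combination H * (keyPQ k).2.2.1 - H' * (keyPQ k).1 - A (2*(k:ℤ)) * hdiff
          - H' * (1-H) * hMr k
      have hdene : ∀ k : ℕ, 0 < (1-H') - (1-H)*r^k := by
        intro k
        have := mul_le_of_le_one_right h1H.le (hrk1 k)
        linarith
      have hBo : ∀ k : ℕ, B (2*(k:ℤ)+1) = (H*(1-H') - H'*(1-H)*r^k) * L^k / s := by
        intro k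
        rw [eq_div_iff hs.ne']
        linear_combination (keyPQ k).2.2.2 - (keyPQ k).2.1 - B (2*(k:ℤ)+1) * hdiff
          - H' * (1-H) * hMr k
      have hAo : ∀ k : ℕ, A (2*(k:ℤ)+1) = (H*H*(1-H') - H'*H'*(1-H)*r^k) * L^k / s := by
        intro k
        rw [eq_div_iff hs.ne']
        linear_combination H * (keyPQ k).2.2.2 - H' * (keyPQ k).2.1 - A (2*(k:ℤ)+1) * hdiff
          - H' * H' * (1-H) * hMr k
      have hdeno : ∀ k : ℕ, 0 < H*(1-H') - H'*(1-H)*r^k := by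
        intro k
        have h1 := mul_le_of_le_one_right (mul_nonneg hH'pos.le h1H.le) (hrk1 k)
        have h2 : H*(1-H') - H'*(1-H) = H - H' := by ring
        linarith
      apply glue1
      · have hn : Tendsto (fun k : ℕ => H*(1-H') - H'*(1-H)*r^k) atTop (𝓝 (H*(1-H'))) := by
          simpa using tendsto_const_nhds.sub (hrpow.const_mul (H'*(1-H)))
        have hd : Tendsto (fun k : ℕ => (1-H') - (1-H)*r^k) atTop (𝓝 (1-H')) := by
          simpa using tendsto_const_nhds.sub (hrpow.const_mul (1-H))
        have ht := hn.div hd h1H'.ne'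
        rw [mul_div_cancel_right₀ H h1H'.ne'] at ht
        refine Tendsto.congr (fun k => ?_) ht
        simp only [Pi.div_apply]
        rw [hAe k, hBe k]
        have hLk : L^k ≠ 0 := (pow_pos hLpos k).ne'
        have hde := (hdene k).ne'
        field_simp [hs.ne', hLk, hde]
      · have hn : Tendsto (fun k : ℕ => H*H*(1-H') - H'*H'*(1-H)*r^k) atTop (𝓝 (H*H*(1-H'))) := by
          simpa using tendsto_const_nhds.sub (hrpow.const_mul (H'*H'*(1-H)))
        have hd : Tendsto (fun k : ℕ => H*(1-H') - H'*(1-H)*r^k) atTop (𝓝 (H*(1-H'))) := by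
          simpa using tendsto_const_nhds.sub (hrpow.const_mul (H'*(1-H)))
        have hlim : H*H*(1-H') / (H*(1-H')) = H := by
          field_simp
        have ht := hn.div hd (mul_pos hHpos h1H').ne'
        rw [hlim] at ht
        refine Tendsto.congr (fun k => ?_) ht
        simp only [Pi.div_apply]
        rw [hAo k, hBo k]
        have hLk : L^k ≠ 0 := (pow_pos hLpos k).ne'
        have hde := (hdeno k).ne'
        field_simp [hs.ne', hLk, hde]
  · -- primed limit
    rcases eq_or_lt_of_le hs0 with hs | hs
    · -- degenerate case s = 0
      replace hs : s = 0 := hs.symm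
      have hHH' : H = H' := by linarith
      have hc2 : c = H^2 := by rw [← hprod, hHH']; ring
      have hL2 : L = H - H^2 := by rw [hLc, hc2]
      have ha2 : a = (1-H)^2 := by rw [haHH, ← hHH']; ring
      have hB'deg : ∀ k : ℕ, (1-H) * B' (-(2*(k:ℤ))) = ((k:ℝ)+1-H) * L^k ∧
          (1-H) * B' (-(2*(k:ℤ))-1) = (1-H) * ((k:ℝ)+1) * L^k := by
        intro k
        induction k with
        | zero => norm_num [hB'0, hB'm1]
        | succ k ih =>
          obtain ⟨ih1, ih2⟩ := ih
          have e3 : (-(2*(((k:ℕ)+1:ℕ)):ℤ))-1 = -(2*(k:ℤ))-3 := by push_cast; ring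
          have e2 : (-(2*(((k:ℕ)+1:ℕ)):ℤ)) = -(2*(k:ℤ))-2 := by push_cast; ring
          rw [e3, e2]
          push_cast
          have f1 : (1-H) * B' (-(2*(k:ℤ))-2) = ((k:ℝ)+1+1-H) * L^(k+1) := by
            rw [rB'e k]
            linear_combination ih2 - a*ih1 - ((k:ℝ)+1-H)*L^k*ha2 - ((k:ℝ)+2-H)*L^k*hL2
          have f2 : (1-H) * B' (-(2*(k:ℤ))-3) = (1-H) * (((k:ℝ)+1)+1) * L^(k+1) := by
            rw [rB'o k]
            linear_combination f1 - c*ih2 - (1-H)*((k:ℝ)+1)*L^k*hc2 + H*((k:ℝ)+1)*L^k*hL2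
          exact ⟨f1, f2⟩
      have hA'e : ∀ k : ℕ, (1-H) * A' (-(2*(k:ℤ))) = H * (k:ℝ) * L^k := by
        intro k
        linear_combination (1-H) * (keyPQ' k).1 + H * (hB'deg k).1
      have hA'o2 : ∀ k : ℕ, (1-H) * A' (-(2*(k:ℤ))-1) = (1-H) * (H * ((k:ℝ)+H)) * L^k := by
        intro k
        linear_combination (1-H) * (keyPQ' k).2.1 + H * (hB'deg k).2 - (1-H)*L^k*hL2
      have hB'ev : ∀ k : ℕ, B' (-(2*(k:ℤ))) = ((k:ℝ)+1-H) * L^k / (1-H) := fun k => by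
        rw [eq_div_iff h1H.ne']; linear_combination (hB'deg k).1
      have hA'ev : ∀ k : ℕ, A' (-(2*(k:ℤ))) = H * (k:ℝ) * L^k / (1-H) := fun k => by
        rw [eq_div_iff h1H.ne']; linear_combination (hA'e k)
      have hB'od : ∀ k : ℕ, B' (-(2*(k:ℤ))-1) = ((k:ℝ)+1) * L^k :=
        fun k => mul_left_cancel₀ h1H.ne' ((hB'deg k).2.trans (by ring))
      have hA'od : ∀ k : ℕ, A' (-(2*(k:ℤ))-1) = H * ((k:ℝ)+H) * L^k :=
        fun k => mul_left_cancel₀ h1H.ne' ((hA'o2 k).trans (by ring))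
      rw [← hHH']
      apply glue2
      · refine Tendsto.congr (fun k => ?_) (tendsto_aux H (-(H*(1-H))) (1-H))
        rw [hA'ev k, hB'ev k]
        have hk : (0:ℝ) < (k:ℝ) + (1-H) := add_pos_of_nonneg_of_pos (Nat.cast_nonneg k) h1H
        have hk2 : (0:ℝ) < (k:ℝ) + 1 - H := by linarith
        have hLk : L^k ≠ 0 := (pow_pos hLpos k).ne'
        field_simp [h1H.ne', hk.ne', hk2.ne', hLk]
        ring
      · refine Tendsto.congr (fun k => ?_) (tendsto_aux H (-(H*(1-H))) 1)
        rw [hA'od k, hB'od k]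
        have hk : (0:ℝ) < (k:ℝ) + 1 := by positivity
        have hLk : L^k ≠ 0 := (pow_pos hLpos k).ne'
        field_simp [hk.ne', hLk]
        ring
    · -- nondegenerate case 0 < s
      have hH'H : H' < H := by linarith
      set r : ℝ := M / L with hrdef
      have hr0 : 0 ≤ r := div_nonneg hMpos.le hLpos.le
      have hr1 : r < 1 := (div_lt_one hLpos).2 (by linarith)
      have hrpow : Tendsto (fun k : ℕ => r ^ k) atTop (𝓝 0) :=
        tendsto_pow_atTop_nhds_zero_of_lt_one hr0 hr1
      have hMr : ∀ k : ℕ, M ^ k = r ^ k * L ^ k := by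
        intro k; rw [hrdef, div_pow, div_mul_cancel₀]
        exact pow_ne_zero _ hLpos.ne'
      have hrk1 : ∀ k : ℕ, r ^ k ≤ 1 := fun k => pow_le_one₀ hr0 hr1.le
      have hB'e : ∀ k : ℕ, B' (-(2*(k:ℤ))) = (H - H'*r^k) * L^k / s := by
        intro k
        rw [eq_div_iff hs.ne']
        linear_combination (keyPQ' k).2.2.1 - (keyPQ' k).1 - B' (-(2*(k:ℤ))) * hdiff
          - H' * hMr k
      have hA'e : ∀ k : ℕ, A' (-(2*(k:ℤ))) = (c - c*r^k) * L^k / s := by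
        intro k
        rw [eq_div_iff hs.ne']
        linear_combination H * (keyPQ' k).2.2.1 - H' * (keyPQ' k).1 - A' (-(2*(k:ℤ))) * hdiff
          - H*H' * hMr k + (L^k - r^k*L^k) * hprod
      have hdene : ∀ k : ℕ, 0 < H - H'*r^k := by
        intro k
        have := mul_le_of_le_one_right hH'pos.le (hrk1 k)
        linarith
      have hB'o : ∀ k : ℕ, B' (-(2*(k:ℤ))-1) = (1 - r^(k+1)) * L^(k+1) / s := by
        intro k
        rw [eq_div_iff hs.ne']
        linear_combination (keyPQ' k).2.2.2 - (keyPQ' k).2.1 - B' (-(2*(k:ℤ))-1) * hdiff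
          - hMr (k+1)
      have hA'o : ∀ k : ℕ, A' (-(2*(k:ℤ))-1) = (H' - H*r^(k+1)) * L^(k+1) / s := by
        intro k
        rw [eq_div_iff hs.ne']
        linear_combination H * (keyPQ' k).2.2.2 - H' * (keyPQ' k).2.1
          - A' (-(2*(k:ℤ))-1) * hdiff - H * hMr (k+1)
      have hdeno : ∀ k : ℕ, 0 < 1 - r^(k+1) := by
        intro k
        have h1 : r^(k+1) ≤ r := by
          calc r^(k+1) = r^k * r := by rw [pow_succ]
          _ ≤ 1 * r := by exact mul_le_mul_of_nonneg_right (hrk1 k) hr0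
          _ = r := one_mul r
        linarith
      apply glue2
      · have hn : Tendsto (fun k : ℕ => c - c*r^k) atTop (𝓝 c) := by
          simpa using tendsto_const_nhds.sub (hrpow.const_mul c)
        have hd : Tendsto (fun k : ℕ => H - H'*r^k) atTop (𝓝 H) := by
          simpa using tendsto_const_nhds.sub (hrpow.const_mul H')
        have ht := hn.div hd hHpos.ne'
        rw [hH'eq]
        refine Tendsto.congr (fun k => ?_) ht
        simp only [Pi.div_apply]
        rw [hA'e k, hB'e k]
        have hLk : L^k ≠ 0 := (pow_pos hLpos k).ne'
        have hde := (hdene k).ne'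
        field_simp [hs.ne', hLk, hde]
      · have hrpow1 : Tendsto (fun k : ℕ => r ^ (k+1)) atTop (𝓝 0) := by
          simpa [pow_succ] using hrpow.mul_const r
        have hn : Tendsto (fun k : ℕ => H' - H*r^(k+1)) atTop (𝓝 H') := by
          simpa using tendsto_const_nhds.sub (hrpow1.const_mul H)
        have hd : Tendsto (fun k : ℕ => 1 - r^(k+1)) atTop (𝓝 1) := by
          simpa using tendsto_const_nhds.sub hrpow1
        have ht := hn.div hd one_ne_zero
        rw [div_one] at ht
        refine Tendsto.congr (fun k => ?_) ht
        simp only [Pi.div_apply]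
        rw [hA'o k, hB'o k]
        have hLk : L^(k+1) ≠ 0 := (pow_pos hLpos (k+1)).ne'
        have hde := (hdeno k).ne'
        field_simp [hs.ne', hLk, hde]
end

section
/- For the random walk on ℤ with constant probabilities, the spectral matrix Ψ(x) = (π√((x-σ₋)(σ₊-x)))^{-1} · [[1, (x-b)/(2c)], [(x-b)/(2c), a/c]] on [σ₋, σ₊] with σ± = 1 - (√a ∓ √c)², is positive semidefinite for every x ∈ (σ₋, σ₊); indeed its determinant equals (a/c - ((x-b)/(2c))²)/(π²(x-σ₋)(σ₊-x)) ≥ 0 and its (1,1) entry is positive, because |x - b| ≤ 2√(ac) on [σ₋, σ₊]. -/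
open Real

set_option maxHeartbeats 1000000 in
/-- positive semidefiniteness of the spectral matrix of the constant random
walk on `(σ₋, σ₊)`: its determinant is as stated and nonnegative, its `(1,1)` entry is
positive, and `|x - b| ≤ 2√(ac)` on the spectral interval. -/
theorem stmt13
    (a b c : ℝ) (ha : 0 < a) (hc : 0 < c) (hb : 0 ≤ b) (habc : a + b + c = 1) :
    let σm : ℝ := 1 - (Real.sqrt a + Real.sqrt c) ^ 2
    let σp : ℝ := 1 - (Real.sqrt a - Real.sqrt c) ^ 2
    ∀ x : ℝ, x ∈ Set.Ioo σm σp →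
      let Ψ : Matrix (Fin 2) (Fin 2) ℝ :=
        (1 / (Real.pi * Real.sqrt ((x - σm) * (σp - x)))) •
          !![1, (x - b) / (2 * c); (x - b) / (2 * c), a / c]
      |x - b| ≤ 2 * Real.sqrt (a * c) ∧
      Ψ.PosSemidef ∧
      Ψ.det = (a / c - ((x - b) / (2 * c)) ^ 2) / (Real.pi ^ 2 * ((x - σm) * (σp - x))) ∧
      0 ≤ Ψ.det ∧
      0 < Ψ 0 0 := by
  intro σm σp x hx Ψ
  have hac : (0:ℝ) < a * c := mul_pos ha hc
  have hs0 : 0 < Real.sqrt (a*c) := Real.sqrt_pos.2 hac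
  have hsa : Real.sqrt a ^ 2 = a := Real.sq_sqrt ha.le
  have hsc : Real.sqrt c ^ 2 = c := Real.sq_sqrt hc.le
  have hmul : Real.sqrt a * Real.sqrt c = Real.sqrt (a*c) := (Real.sqrt_mul ha.le c).symm
  have hs2 : Real.sqrt (a*c)^2 = a*c := Real.sq_sqrt hac.le
  have hm : σm = b - 2*Real.sqrt (a*c) := by
    show 1 - (Real.sqrt a + Real.sqrt c)^2 = _
    have : (Real.sqrt a + Real.sqrt c)^2
        = Real.sqrt a ^2 + Real.sqrt c ^2 + 2*(Real.sqrt a * Real.sqrt c) := by ring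
    rw [this, hsa, hsc, hmul]; linarith
  have hp : σp = b + 2*Real.sqrt (a*c) := by
    show 1 - (Real.sqrt a - Real.sqrt c)^2 = _
    have : (Real.sqrt a - Real.sqrt c)^2
        = Real.sqrt a ^2 + Real.sqrt c ^2 - 2*(Real.sqrt a * Real.sqrt c) := by ring
    rw [this, hsa, hsc, hmul]; linarith
  obtain ⟨h1, h2⟩ := hx
  rw [hm] at h1
  rw [hp] at h2
  have habs : |x - b| ≤ 2 * Real.sqrt (a*c) :=
    le_of_lt (abs_lt.2 ⟨by linarith, by linarith⟩)
  have hD : (x - σm) * (σp - x) = 4*(a*c) - (x-b)^2 := by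
    rw [hm, hp]; linear_combination 4*hs2
  have hDpos : 0 < (x - σm) * (σp - x) := by
    rw [hm, hp]; exact mul_pos (by linarith) (by linarith)
  have hsqD : Real.sqrt ((x - σm) * (σp - x)) ^ 2 = (x - σm) * (σp - x) :=
    Real.sq_sqrt hDpos.le
  have hsqDpos : 0 < Real.sqrt ((x - σm) * (σp - x)) := Real.sqrt_pos.2 hDpos
  have hπ : 0 < Real.pi := Real.pi_pos
  set q : ℝ := (x - b) / (2 * c) with hq
  set r : ℝ := Real.sqrt ((x - σm) * (σp - x)) with hr
  set k : ℝ := 1 / (Real.pi * r) with hk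
  have hkpos : 0 < k := by positivity
  have hΨ : Ψ = k • !![1, q; q, a / c] := rfl
  clear_value Ψ
  clear_value k
  have hqsq : q ^ 2 ≤ a / c := by
    rw [hq, div_pow, div_le_div_iff₀ (by positivity) hc]
    have hx2 : (x - b)^2 ≤ 4*(a*c) := by
      nlinarith [sq_abs (x-b), hs2, habs, hs0]
    nlinarith [hx2, hc]
  set D : ℝ := (x - σm) * (σp - x) with hDdef
  clear_value σm σp
  clear_value q
  have hrD : r ^ 2 = D := hsqD
  clear_value r D
  have hdet : Ψ.det = (a / c - q ^ 2) / (Real.pi ^ 2 * D) := by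
    have e1 : Ψ.det = k ^ 2 * (a/c - q^2) := by
      rw [hΨ]
      simp [Matrix.det_fin_two, Matrix.smul_apply]
      ring
    rw [e1, hk, ← hrD, div_pow, one_pow, mul_pow, div_mul_eq_mul_div, one_mul]
  refine ⟨habs, ?_, hdet, ?_, ?_⟩
  · rw [Matrix.posSemidef_iff_dotProduct_mulVec]
    constructor
    · rw [hΨ]
      ext i j
      fin_cases i <;> fin_cases j <;>
        simp [Matrix.conjTranspose_apply, Matrix.smul_apply]
    · intro v
      have hv : dotProduct (star v) (Ψ.mulVec v)
          = k * ((v 0 + q * v 1)^2 + (a/c - q^2) * (v 1)^2) := by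
        rw [hΨ]
        simp [dotProduct, Matrix.mulVec, Fin.sum_univ_two, Matrix.smul_apply]
        ring
      rw [hv]
      have h0 : 0 ≤ (v 0 + q * v 1)^2 + (a/c - q^2) * (v 1)^2 := by
        nlinarith [sq_nonneg (v 0 + q * v 1), sq_nonneg (v 1)]
      positivity
  · rw [hdet]
    exact div_nonneg (by linarith) (by positivity)
  · rw [hΨ]
    simp [Matrix.smul_apply]
    positivity
end

section
/- For the random walk on ℤ with attractive/repulsive force (a_n = a, c_n = c for n ≥ 0 and a_{-n} = c, c_{-n} = a for n ≥ 1), the continued fractions are H = ½(1+c-a+√((1+c-a)²-4c)) and H' = (c/(2a))(1+a-c-√((1+c-a)²-4c)). The inequality H' ≤ H holds if and only if a satisfies: 0 < a ≤ (1-√c)² when 0 < c ≤ 1/4, and 0 < a ≤ (1-2c)/2 when 1/4 ≤ c < 1. -/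
/-!
Clearing the denominator `2a` turns `H' ≤ H` into `(c - a)(1 - a - c) ≤ (a + c)√D`, where
`D = (1 - a - c)² - 4ac = ((1 - √c)² - a)((1 + √c)² - a) ≥ 0`. For `c ≤ a` the left side is nonpositive; for `a < c` squaring and
using `(a + c)² - (c - a)² = 4ac` reduces it to `(a + c)² ≤ (1 - a - c)²`, i.e. `a + c ≤ 1/2`.
Since `c ≤ a ≤ (1 - √c)²` forces `c ≤ 1/4`, both sides of the equivalence say
`c ≤ 1/4 ∨ a + c ≤ 1/2`.
-/

lemma dual_le_root_iff {a c : ℝ} (ha : 0 < a) (s : ℝ) :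
    c / (2 * a) * (1 + a - c - s) ≤ (1 + c - a + s) / 2 ↔
      (c - a) * (1 - a - c) ≤ (a + c) * s := by
  rw [div_mul_eq_mul_div, div_le_div_iff₀ (by positivity) two_pos]
  constructor <;> intro h <;> nlinarith

lemma discriminant_nonneg {a c : ℝ} (hc : 0 ≤ c) (h : a ≤ (1 - √c) ^ 2) :
    0 ≤ (1 + c - a) ^ 2 - 4 * c := by
  have hfactor : (1 + c - a) ^ 2 - 4 * c = ((1 - √c) ^ 2 - a) * ((1 + √c) ^ 2 - a) := by
    linear_combination (2 + 2 * a - c - √c ^ 2) * Real.sq_sqrt hc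
  rw [hfactor]
  exact mul_nonneg (by linarith) (by nlinarith [Real.sqrt_nonneg c])

lemma sub_mul_le_add_mul_sqrt_iff {a c : ℝ} (ha : 0 < a) (hc : 0 < c) (hac : a + c ≤ 1)
    (hD : 0 ≤ (1 + c - a) ^ 2 - 4 * c) :
    (c - a) * (1 - a - c) ≤ (a + c) * √((1 + c - a) ^ 2 - 4 * c) ↔ c ≤ a ∨ a + c ≤ 1 / 2 := by
  have hD' : (1 + c - a) ^ 2 - 4 * c = (1 - a - c) ^ 2 - 4 * a * c := by ring
  have hrhs : 0 ≤ (a + c) * √((1 + c - a) ^ 2 - 4 * c) := by positivity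
  rcases le_or_gt c a with hca | hca
  · simp only [hca, true_or, iff_true]
    nlinarith
  have hlhs : 0 ≤ (c - a) * (1 - a - c) := mul_nonneg (by linarith) (by linarith)
  simp only [not_le.mpr hca, false_or]
  rw [← abs_of_nonneg hlhs, ← abs_of_nonneg hrhs, ← sq_le_sq, mul_pow, mul_pow,
    Real.sq_sqrt hD, hD']
  constructor <;> intro h <;> nlinarith [mul_pos ha hc]

lemma le_quarter_of_le_of_le_one_sub_sqrt_sq {a c : ℝ} (hc : 0 ≤ c) (hca : c ≤ a)
    (h : a ≤ (1 - √c) ^ 2) : c ≤ 1 / 4 := by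
  have hsq : √c ^ 2 = c := Real.sq_sqrt hc
  nlinarith [Real.sqrt_nonneg c]

theorem stmt16_general
    (a c : ℝ) (ha : 0 < a) (hc : 0 < c) (hc1 : c < 1)
    (hac : a + c ≤ 1) (hconv : a ≤ (1 - Real.sqrt c) ^ 2) :
    let D : ℝ := (1 + c - a) ^ 2 - 4 * c
    let H : ℝ := (1 + c - a + Real.sqrt D) / 2
    let H' : ℝ := (c / (2 * a)) * (1 + a - c - Real.sqrt D)
    (H' ≤ H ↔
      ((0 < c ∧ c ≤ 1 / 4 ∧ 0 < a ∧ a ≤ (1 - Real.sqrt c) ^ 2) ∨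
        (1 / 4 ≤ c ∧ c < 1 ∧ 0 < a ∧ a ≤ (1 - 2 * c) / 2))) := by
  intro D H H'
  rw [dual_le_root_iff ha,
    sub_mul_le_add_mul_sqrt_iff ha hc hac (discriminant_nonneg hc.le hconv)]
  constructor
  · rintro (hca | hsum)
    · exact Or.inl ⟨hc, le_quarter_of_le_of_le_one_sub_sqrt_sq hc.le hca hconv, ha, hconv⟩
    · rcases le_total c (1 / 4) with hc4 | hc4
      · exact Or.inl ⟨hc, hc4, ha, hconv⟩
      · exact Or.inr ⟨hc4, hc1, ha, by linarith⟩
  · rintro (⟨-, hc4, -, -⟩ | ⟨-, -, -, ha2⟩)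
    · rcases le_or_gt c a with hca | hca
      · exact Or.inl hca
      · exact Or.inr (by linarith)
    · exact Or.inr (by linarith)

/-- for the random walk on `ℤ` with an attractive or repulsive force,
with `H = ½(1+c-a+√D)` and `H' = (c/(2a))(1+a-c-√D)` where `D = (1+c-a)² - 4c`,
the inequality `H' ≤ H` holds if and only if `a` lies in the range
`0 < a ≤ (1-√c)²` when `0 < c ≤ 1/4`, and `0 < a ≤ (1-2c)/2` when `1/4 ≤ c < 1`. -/
theorem stmt16
    (a c : ℝ) (ha : 0 < a) (ha1 : a < 1) (hc : 0 < c) (hc1 : c < 1)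
    (hac : a + c ≤ 1) (hconv : a ≤ (1 - Real.sqrt c) ^ 2) :
    let D : ℝ := (1 + c - a) ^ 2 - 4 * c
    let H : ℝ := (1 + c - a + Real.sqrt D) / 2
    let H' : ℝ := (c / (2 * a)) * (1 + a - c - Real.sqrt D)
    (H' ≤ H ↔
      ((0 < c ∧ c ≤ 1 / 4 ∧ 0 < a ∧ a ≤ (1 - Real.sqrt c) ^ 2) ∨
        (1 / 4 ≤ c ∧ c < 1 ∧ 0 < a ∧ a ≤ (1 - 2 * c) / 2))) :=
  stmt16_general a c ha hc hc1 hac hconv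
end
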